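/- arXiv:2012.12484 — 8 statements merged into one kernel-verified Lean document; each statement's English description precedes it below -/
import Mathlib

section
/- Let I and K be ideals on a set S such that I ∪ K generates a proper ideal (equivalently, S ≠ I₀ ∪ K₀ for all I₀ ∈ I, K₀ ∈ K). Then a function f : S → X into a topological space X is I^(K*)-convergent to x if and only if f is (I ∨ K)*-convergent to x, where I ∨ K denotes the ideal generated by I ∪ K. -/
def IsIdeal {S : Type*} (I : Set (Set S)) : Prop :=
  ∅ ∈ I ∧ (∀ A B : Set S, A ∈ I → B ∈ I → A ∪ B ∈ I) ∧
  (∀ A B : Set S, B ∈ I → A ⊆ B → A ∈ I) ∧ (Set.univ : Set S) ∉ I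

/-- `f` is `K`-convergent to `x`. -/
def IdealConv {S X : Type*} [TopologicalSpace X] (K : Set (Set S)) (f : S → X) (x : X) : Prop :=
  ∀ U ∈ nhds x, {s | f s ∉ U} ∈ K

open Classical in
/-- `f` is `I^K`-convergent to `x`. -/
def IKConv {S X : Type*} [TopologicalSpace X] (I K : Set (Set S)) (f : S → X) (x : X) : Prop :=
  ∃ M : Set S, Mᶜ ∈ I ∧ IdealConv K (fun s => if s ∈ M then f s else x) x

/-- The ideal generated by `I ∪ K`. -/
def GenIdeal {S : Type*} (I K : Set (Set S)) : Set (Set S) :=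
  {A | ∃ I₀ ∈ I, ∃ K₀ ∈ K, A ⊆ I₀ ∪ K₀}

/-- The ideality condition: `I ∪ K` generates a proper ideal. -/
def IdealityCond {S : Type*} (I K : Set (Set S)) : Prop :=
  ∀ I₀ ∈ I, ∀ K₀ ∈ K, I₀ ∪ K₀ ≠ Set.univ

open Classical in
/-- `f` is `J*`-convergent to `x` (for the ideal `J`). -/
def StarConv {S X : Type*} [TopologicalSpace X] (J : Set (Set S)) (f : S → X) (x : X) : Prop :=
  ∃ N : Set S, Nᶜ ∈ J ∧ ∀ U ∈ nhds x, {s | (if s ∈ N then f s else x) ∉ U}.Finite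

open Classical in
/-- `f` is `I^(K*)`-convergent to `x`. -/
def IKStarConv {S X : Type*} [TopologicalSpace X] (I K : Set (Set S)) (f : S → X) (x : X) : Prop :=
  ∃ M : Set S, Mᶜ ∈ I ∧ StarConv K (fun s => if s ∈ M then f s else x) x

/-!
Outside the set where a cut-off `if s ∈ M then f s else x` agrees with `f`, it takes the value `x`,
so it escapes a neighbourhood `U` of `x` exactly on `M ∩ f ⁻¹' Uᶜ`. Cutting off first by `M` (with
`Mᶜ ∈ I`) and then by `N` (with `Nᶜ ∈ K`) is therefore a single cut-off by `M ∩ N`, and the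
complements of such intersections are, up to subsets, exactly the members of the ideal generated
by `I ∪ K`.
-/

open Set Filter Topology

theorem preimage_ite_compl {S X : Type*} {A : Set S} {U : Set X} {f : S → X} {x : X}
    [DecidablePred (· ∈ A)] (hx : x ∈ U) :
    (fun s => if s ∈ A then f s else x) ⁻¹' Uᶜ = A ∩ f ⁻¹' Uᶜ := by
  ext s
  by_cases hs : s ∈ A <;> simp [hs, hx]

section

variable {S X : Type*} [TopologicalSpace X]

theorem starConv_iff {J : Set (Set S)} {f : S → X} {x : X} :
    StarConv J f x ↔ ∃ N : Set S, Nᶜ ∈ J ∧ ∀ U ∈ 𝓝 x, (N ∩ f ⁻¹' Uᶜ).Finite := by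
  refine exists_congr fun N => and_congr_right fun _ => forall₂_congr fun U hU => ?_
  classical
  rw [← preimage_ite_compl (mem_of_mem_nhds hU)]
  rfl

theorem ikStarConv_iff {I K : Set (Set S)} {f : S → X} {x : X} :
    IKStarConv I K f x ↔
      ∃ M : Set S, Mᶜ ∈ I ∧ ∃ N : Set S, Nᶜ ∈ K ∧ ∀ U ∈ 𝓝 x, (M ∩ N ∩ f ⁻¹' Uᶜ).Finite := by
  refine exists_congr fun M => and_congr_right fun _ => ?_
  rw [starConv_iff]
  refine exists_congr fun N => and_congr_right fun _ => forall₂_congr fun U hU => ?_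
  classical
  rw [preimage_ite_compl (mem_of_mem_nhds hU), ← inter_assoc, inter_comm N M]

end

theorem compl_mem_genIdeal_iff {S : Type*} {I K : Set (Set S)} (hK : IsIdeal K) {P : Set S} :
    Pᶜ ∈ GenIdeal I K ↔ ∃ M : Set S, Mᶜ ∈ I ∧ ∃ N : Set S, Nᶜ ∈ K ∧ M ∩ N ⊆ P := by
  constructor
  · rintro ⟨I₀, hI₀, K₀, hK₀, hP⟩
    refine ⟨I₀ᶜ, by rwa [compl_compl], K₀ᶜ ∪ P, hK.2.2.1 _ _ hK₀ ?_, ?_⟩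
    · rw [compl_union, compl_compl]
      exact inter_subset_left
    · rintro s ⟨hsI, hsK | hsP⟩
      · by_contra hsP
        exact (hP hsP).elim hsI hsK
      · exact hsP
  · rintro ⟨M, hM, N, hN, hMN⟩
    exact ⟨Mᶜ, hM, Nᶜ, hN, compl_inter M N ▸ compl_subset_compl.2 hMN⟩

theorem ikstar_iff_genstar_general {S X : Type*} [TopologicalSpace X]
    (I K : Set (Set S)) (hK : IsIdeal K) (f : S → X) (x : X) :
    IKStarConv I K f x ↔ StarConv (GenIdeal I K) f x := by
  rw [ikStarConv_iff, starConv_iff]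
  constructor
  · rintro ⟨M, hM, N, hN, hfin⟩
    exact ⟨M ∩ N, (compl_mem_genIdeal_iff hK).2 ⟨M, hM, N, hN, subset_rfl⟩, hfin⟩
  · rintro ⟨P, hP, hfin⟩
    obtain ⟨M, hM, N, hN, hMN⟩ := (compl_mem_genIdeal_iff hK).1 hP
    exact ⟨M, hM, N, hN, fun U hU => (hfin U hU).subset (inter_subset_inter_left _ hMN)⟩

theorem ikstar_iff_genstar {S X : Type*} [TopologicalSpace X]
    (I K : Set (Set S)) (hI : IsIdeal I) (hK : IsIdeal K)
    (hIK : IdealityCond I K) (f : S → X) (x : X) :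
    IKStarConv I K f x ↔ StarConv (GenIdeal I K) f x :=
  ikstar_iff_genstar_general I K hK f x
end

section
/- Let I and K be ideals on a set S such that the union I ∪ K generates a proper ideal I ∨ K. If f : S → X is I^K-convergent to x, then f is (I ∨ K)-convergent to x, i.e., for every neighborhood U of x, {s : f(s) ∉ U} belongs to the ideal generated by I ∪ K. -/
theorem setOf_notMem_subset_compl_union_of_eqOn {S X : Type*} {f g : S → X} {M : Set S}
    (hfg : Set.EqOn f g M) (U : Set X) : {s | f s ∉ U} ⊆ Mᶜ ∪ {s | g s ∉ U} := by
  intro s hs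
  by_cases hsM : s ∈ M
  · exact Or.inr (show g s ∉ U from hfg hsM ▸ hs)
  · exact Or.inl hsM

theorem ikconv_implies_genconv_general {S X : Type*} [TopologicalSpace X]
    (I K : Set (Set S)) (f : S → X) (x : X)
    (h : IKConv I K f x) :
    IdealConv (GenIdeal I K) f x := by
  obtain ⟨M, hM, hg⟩ := h
  intro U hU
  exact ⟨Mᶜ, hM, _, hg U hU,
    setOf_notMem_subset_compl_union_of_eqOn (fun s hs => (if_pos hs).symm) U⟩

theorem ikconv_implies_genconv {S X : Type*} [TopologicalSpace X]
    (I K : Set (Set S)) (hI : IsIdeal I) (hK : IsIdeal K)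
    (hIK : IdealityCond I K) (f : S → X) (x : X)
    (h : IKConv I K f x) :
    IdealConv (GenIdeal I K) f x :=
  ikconv_implies_genconv_general I K f x h
end

section
/- Let I, K be ideals on S satisfying the ideality condition (S ≠ I₀ ∪ K₀ for all I₀ ∈ I, K₀ ∈ K), let J ∈ I, and let J be the ideal generated by K ∪ {J} (i.e., sets contained in K₀ ∪ J for some K₀ ∈ K). If f : S → X is J-convergent to x, then f is I^K-convergent to x. -/
theorem IsIdeal.mem_of_subset {S : Type*} {K : Set (Set S)} (hK : IsIdeal K) {A B : Set S}
    (hB : B ∈ K) (hAB : A ⊆ B) : A ∈ K :=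
  hK.2.2.1 A B hB hAB

open Classical in
theorem setOf_ite_not_mem_subset {S X : Type*} (M : Set S) (f : S → X) {x : X} {U : Set X}
    (hx : x ∈ U) : {s | (if s ∈ M then f s else x) ∉ U} ⊆ {s | f s ∉ U} ∩ M := by
  intro s hs
  by_cases hsM : s ∈ M
  · exact ⟨by simpa [hsM] using hs, hsM⟩
  · exact absurd hx (by simpa [hsM] using hs)

open Classical in
theorem IdealConv.ite_of_sup_compl {S X : Type*} [TopologicalSpace X] {K : Set (Set S)}
    (hK : IsIdeal K) {M : Set S} {f : S → X} {x : X}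
    (h : IdealConv {A | ∃ K₀ ∈ K, A ⊆ K₀ ∪ Mᶜ} f x) :
    IdealConv K (fun s => if s ∈ M then f s else x) x := by
  intro U hU
  obtain ⟨K₀, hK₀, hsub⟩ := h U hU
  refine hK.mem_of_subset hK₀ ((setOf_ite_not_mem_subset M f (mem_of_mem_nhds hU)).trans ?_)
  rintro s ⟨hfs, hsM⟩
  exact (hsub hfs).resolve_right (not_not_intro hsM)

theorem jconv_implies_ikconv_general {S X : Type*} [TopologicalSpace X]
    (I K : Set (Set S)) (hK : IsIdeal K)
    (J₀ : Set S) (hJ₀ : J₀ ∈ I)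
    (f : S → X) (x : X)
    (h : IdealConv {A | ∃ K₀ ∈ K, A ⊆ K₀ ∪ J₀} f x) :
    IKConv I K f x := by
  refine ⟨J₀ᶜ, by rwa [compl_compl], IdealConv.ite_of_sup_compl hK ?_⟩
  rwa [compl_compl]

theorem jconv_implies_ikconv {S X : Type*} [TopologicalSpace X]
    (I K : Set (Set S)) (hI : IsIdeal I) (hK : IsIdeal K)
    (hIK : IdealityCond I K) (J₀ : Set S) (hJ₀ : J₀ ∈ I)
    (f : S → X) (x : X)
    (h : IdealConv {A | ∃ K₀ ∈ K, A ⊆ K₀ ∪ J₀} f x) :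
    IKConv I K f x :=
  jconv_implies_ikconv_general I K hK J₀ hJ₀ f x h
end

section
/- Let X be a Hausdorff topological space and let I, K be ideals on S such that I ∪ K generates a proper ideal. Then every function f : S → X has at most one I^K-limit. -/
/-! An `I^K`-limit is a limit along the ideal generated by `I ∪ K`. For disjoint neighbourhoods
`U ∋ x`, `V ∋ y` the sets `{f ∉ U}` and `{f ∉ V}` cover `S`, so two distinct limits would put `S`
into that ideal, contradicting the ideality condition. -/

section

variable {S X : Type*}

theorem IKConv.idealConv_genIdeal [TopologicalSpace X] {I K : Set (Set S)} {f : S → X} {x : X}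
    (h : IKConv I K f x) : IdealConv (GenIdeal I K) f x := by
  classical
  obtain ⟨M, hMc, hM⟩ := h
  intro U hU
  refine ⟨Mᶜ, hMc, _, hM U hU, fun s hs => ?_⟩
  by_cases hsM : s ∈ M
  · exact Or.inr (by simpa [hsM] using hs)
  · exact Or.inl hsM

theorem genIdeal_union_mem {I K : Set (Set S)}
    (hI : ∀ A B : Set S, A ∈ I → B ∈ I → A ∪ B ∈ I)
    (hK : ∀ A B : Set S, A ∈ K → B ∈ K → A ∪ B ∈ K) {A B : Set S}
    (hA : A ∈ GenIdeal I K) (hB : B ∈ GenIdeal I K) : A ∪ B ∈ GenIdeal I K := by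
  obtain ⟨I₁, hI₁, K₁, hK₁, hA⟩ := hA
  obtain ⟨I₂, hI₂, K₂, hK₂, hB⟩ := hB
  refine ⟨I₁ ∪ I₂, hI _ _ hI₁ hI₂, K₁ ∪ K₂, hK _ _ hK₁ hK₂, ?_⟩
  exact (Set.union_subset_union hA hB).trans (Set.union_union_union_comm _ _ _ _).subset

theorem IdealityCond.univ_notMem_genIdeal {I K : Set (Set S)} (h : IdealityCond I K) :
    Set.univ ∉ GenIdeal I K := fun ⟨I₀, hI₀, K₀, hK₀, hsub⟩ =>
  h I₀ hI₀ K₀ hK₀ (Set.univ_subset_iff.mp hsub)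

theorem IdealConv.eq [TopologicalSpace X] [T2Space X] {J : Set (Set S)}
    (hJ : ∀ A B : Set S, A ∈ J → B ∈ J → A ∪ B ∈ J) (hJ_univ : Set.univ ∉ J)
    {f : S → X} {x y : X} (hx : IdealConv J f x) (hy : IdealConv J f y) : x = y := by
  by_contra hne
  obtain ⟨U, V, hU, hV, hxU, hyV, hUV⟩ := t2_separation hne
  have hcover : {s | f s ∉ U} ∪ {s | f s ∉ V} = Set.univ :=
    Set.eq_univ_of_forall fun s => not_and_or.mp fun ⟨hsU, hsV⟩ =>
      Set.disjoint_left.mp hUV hsU hsV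
  exact hJ_univ (hcover ▸ hJ _ _ (hx U (hU.mem_nhds hxU)) (hy V (hV.mem_nhds hyV)))

end

theorem ikconv_limit_unique {S X : Type*} [TopologicalSpace X] [T2Space X]
    (I K : Set (Set S)) (hI : IsIdeal I) (hK : IsIdeal K)
    (hIK : IdealityCond I K) (f : S → X) (x y : X)
    (hx : IKConv I K f x) (hy : IKConv I K f y) :
    x = y :=
  IdealConv.eq (fun _ _ => genIdeal_union_mem hI.2.1 hK.2.1) hIK.univ_notMem_genIdeal
    hx.idealConv_genIdeal hy.idealConv_genIdeal
end

section
/- Let X be a Hausdorff space, I and K ideals on S with I ∪ K generating a proper ideal, and f : S → X a function that is I^K-convergent to some point. Then there exists an ideal J on S such that for all x ∈ X, f is I^K-convergent to x if and only if f is J-convergent to x. -/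
/-!
If `f` is `I^K`-convergent to `x` via `M` and to `y` via `M'`, then for separating neighbourhoods
`U ∋ x`, `V ∋ y` the sets `Mᶜ ∪ M'ᶜ ∈ I` and `({f ∉ U} ∩ M) ∪ ({f ∉ V} ∩ M') ∈ K` cover `S`,
contradicting the ideality condition; so `I^K`-limits are unique. Fixing a witness `M` of the
limit, `I^K`-convergence to `x` is then `J`-convergence for `J = {A | A ∩ M ∈ K}`, the ideal
generated by `K ∪ {Mᶜ}`, which is proper because `M ∉ K`.
-/

open Set

section

variable {S X : Type*} [TopologicalSpace X]

def restrictIdeal (K : Set (Set S)) (M : Set S) : Set (Set S) :=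
  {A | A ∩ M ∈ K}

theorem isIdeal_restrictIdeal {K : Set (Set S)} {M : Set S} (hK : IsIdeal K) (hM : M ∉ K) :
    IsIdeal (restrictIdeal K M) := by
  obtain ⟨hK_empty, hK_union, hK_subset, -⟩ := hK
  refine ⟨by simpa [restrictIdeal] using hK_empty, fun A B hA hB => ?_,
    fun A B hB hAB => hK_subset _ _ hB (inter_subset_inter_left M hAB), by simpa [restrictIdeal]⟩
  simpa only [restrictIdeal, mem_ofPred_eq, union_inter_distrib_right] using hK_union _ _ hA hB

theorem IdealityCond.notMem_of_compl_mem {I K : Set (Set S)} (h : IdealityCond I K) {M : Set S}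
    (hM : Mᶜ ∈ I) : M ∉ K :=
  fun hMK => h _ hM _ hMK (compl_union_self M)

open Classical in
theorem idealConv_ite_iff {K : Set (Set S)} {M : Set S} {f : S → X} {x : X} :
    IdealConv K (fun s => if s ∈ M then f s else x) x ↔ IdealConv (restrictIdeal K M) f x := by
  refine forall₂_congr fun U hU => ?_
  have hxU := mem_of_mem_nhds hU
  suffices {s | (if s ∈ M then f s else x) ∉ U} = {s | f s ∉ U} ∩ M by
    rw [this]; rfl
  ext s
  by_cases hs : s ∈ M <;> simp [hs, hxU]

theorem ikConv_iff {I K : Set (Set S)} {f : S → X} {x : X} :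
    IKConv I K f x ↔ ∃ M, Mᶜ ∈ I ∧ IdealConv (restrictIdeal K M) f x := by
  simp only [IKConv, idealConv_ite_iff]

theorem IKConv.unique [T2Space X] {I K : Set (Set S)} (hI : IsIdeal I) (hK : IsIdeal K)
    (hIK : IdealityCond I K) {f : S → X} {x y : X} (hx : IKConv I K f x)
    (hy : IKConv I K f y) : x = y := by
  obtain ⟨M, hM, hfM⟩ := ikConv_iff.mp hx
  obtain ⟨M', hM', hfM'⟩ := ikConv_iff.mp hy
  by_contra hxy
  obtain ⟨U, V, hU, hV, hxU, hyV, hUV⟩ := t2_separation hxy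
  have hcover : (Mᶜ ∪ M'ᶜ) ∪ ({s | f s ∉ U} ∩ M ∪ {s | f s ∉ V} ∩ M') = univ := by
    refine eq_univ_of_forall fun s => ?_
    have : f s ∉ U ∨ f s ∉ V := not_and_or.mp fun h => disjoint_left.mp hUV h.1 h.2
    by_cases hs : s ∈ M <;> by_cases hs' : s ∈ M' <;> simp_all
  exact hIK _ (hI.2.1 _ _ hM hM') _
    (hK.2.1 _ _ (hfM U (hU.mem_nhds hxU)) (hfM' V (hV.mem_nhds hyV))) hcover

end

theorem exists_ideal_equiv_ikconv {S X : Type*} [TopologicalSpace X] [T2Space X]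
    (I K : Set (Set S)) (hI : IsIdeal I) (hK : IsIdeal K)
    (hIK : IdealityCond I K) (f : S → X)
    (hf : ∃ x₀ : X, IKConv I K f x₀) :
    ∃ J : Set (Set S), IsIdeal J ∧ ∀ x : X, (IKConv I K f x ↔ IdealConv J f x) := by
  obtain ⟨x₀, hx₀⟩ := hf
  obtain ⟨M, hM, hfM⟩ := ikConv_iff.mp hx₀
  refine ⟨restrictIdeal K M, isIdeal_restrictIdeal hK (hIK.notMem_of_compl_mem hM),
    fun x => ⟨fun hx => ?_, fun hfx => ikConv_iff.mpr ⟨M, hM, hfx⟩⟩⟩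
  rwa [hx.unique hI hK hIK hx₀]
end

section
/- Every first countable topological space X is an I^K-sequential space, for any ideals I, K on ω containing all finite sets: every I^K-open subset of X is open. -/
/-- A set `O` is `I^K`-open if no sequence in its complement is `I^K`-convergent to a point of `O`. -/
def IKOpen {X : Type*} [TopologicalSpace X] (I K : Set (Set ℕ)) (O : Set X) : Prop :=
  ∀ x : ℕ → X, (∀ n, x n ∉ O) → ∀ y ∈ O, ¬ IKConv I K x y

/-- An ideal contains all finite sets. -/
def ContainsFin (I : Set (Set ℕ)) : Prop := ∀ A : Set ℕ, A.Finite → A ∈ I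


open Filter Topology

/-- A convergent sequence leaves each neighbourhood of its limit only finitely often. -/
theorem IdealConv.of_tendsto {X : Type*} [TopologicalSpace X] {K : Set (Set ℕ)}
    (hKfin : ContainsFin K) {f : ℕ → X} {x : X} (hf : Tendsto f atTop (𝓝 x)) :
    IdealConv K f x := fun _ hU =>
  hKfin _ <| eventually_cofinite.mp <| Nat.cofinite_eq_atTop ▸ hf.eventually_mem hU

theorem IKConv.of_idealConv {S X : Type*} [TopologicalSpace X] {I K : Set (Set S)}
    (hI : ∅ ∈ I) {f : S → X} {x : X} (hf : IdealConv K f x) : IKConv I K f x :=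
  ⟨Set.univ, by rwa [Set.compl_univ], by simpa only [Set.mem_univ, if_true] using hf⟩

theorem IKOpen.isSeqClosed_compl {X : Type*} [TopologicalSpace X] {I K : Set (Set ℕ)}
    (hIfin : ContainsFin I) (hKfin : ContainsFin K) {O : Set X} (hO : IKOpen I K O) :
    IsSeqClosed Oᶜ := by
  intro x y hx hxy
  by_contra hy
  exact hO x hx y (not_not.mp hy) <|
    IKConv.of_idealConv (hIfin ∅ Set.finite_empty) (IdealConv.of_tendsto hKfin hxy)

theorem firstCountable_ik_sequential_general {X : Type*} [TopologicalSpace X]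
    [FirstCountableTopology X]
    (I K : Set (Set ℕ))
    (hIfin : ContainsFin I) (hKfin : ContainsFin K)
    (O : Set X) (hO : IKOpen I K O) :
    IsOpen O :=
  isClosed_compl_iff.mp (hO.isSeqClosed_compl hIfin hKfin).isClosed

theorem firstCountable_ik_sequential {X : Type*} [TopologicalSpace X]
    [FirstCountableTopology X]
    (I K : Set (Set ℕ)) (hI : IsIdeal I) (hK : IsIdeal K)
    (hIfin : ContainsFin I) (hKfin : ContainsFin K)
    (O : Set X) (hO : IKOpen I K O) :
    IsOpen O :=
  firstCountable_ik_sequential_general I K hIfin hKfin O hO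
end

section
/- Let X be an I^K-sequential space and Y an I^K-closed subspace of X. Then Y with the subspace topology is I^K-sequential. -/
/-!
`O ∪ Yᶜ` is `I^K`-open in `X`: a sequence avoiding it lies in `Y`, so it cannot converge to a
point of `Yᶜ` (as `Y` is `I^K`-closed), and for sequences in `Y` the `I^K`-convergence in `Y` and
in `X` agree, so it cannot converge to a point of `O` either. Hence `O ∪ Yᶜ` is open in `X`, and
`O` is its trace on `Y`.
-/

section Subtype

variable {S X : Type*} [TopologicalSpace X] {Y : Set X}

theorem idealConv_subtype_val_iff (K : Set (Set S)) (f : S → Y) (y : Y) :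
    IdealConv K (fun s => (f s : X)) (y : X) ↔ IdealConv K f y := by
  constructor
  · intro hf U hU
    -- `val '' U ∪ Yᶜ` is a neighbourhood of `y` in `X` whose trace on `Y` is exactly `U`.
    have hV : Subtype.val '' U ∪ Yᶜ ∈ nhds (y : X) := by
      rw [nhds_subtype, Filter.mem_comap] at hU
      obtain ⟨W, hW, hWU⟩ := hU
      refine Filter.mem_of_superset hW fun w hw => ?_
      by_cases hwY : w ∈ Y
      · exact Or.inl ⟨⟨w, hwY⟩, hWU hw, rfl⟩
      · exact Or.inr hwY
    have htrace : {s | f s ∉ U} = {s | (f s : X) ∉ Subtype.val '' U ∪ Yᶜ} := by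
      ext s
      simp
    rw [htrace]
    exact hf _ hV
  · intro hf V hV
    exact hf _ (continuous_subtype_val.continuousAt.preimage_mem_nhds hV)

theorem ikConv_subtype_val_iff (I K : Set (Set S)) (f : S → Y) (y : Y) :
    IKConv I K (fun s => (f s : X)) (y : X) ↔ IKConv I K f y := by
  classical
  refine exists_congr fun M => and_congr_right fun _ => ?_
  have hval : (fun s => if s ∈ M then (f s : X) else y) =
      fun s => ((if s ∈ M then f s else y : Y) : X) := by
    funext s
    split_ifs <;> rfl
  rw [hval, idealConv_subtype_val_iff]

end Subtype

theorem IKOpen.image_val_union_compl {X : Type*} [TopologicalSpace X] {I K : Set (Set ℕ)}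
    {Y : Set X} (hY : IKOpen I K Yᶜ) {O : Set Y} (hO : IKOpen I K O) :
    IKOpen I K (Subtype.val '' O ∪ Yᶜ) := by
  intro x hx y hy hconv
  have hxY : ∀ n, x n ∈ Y := fun n => not_not.mp fun h => hx n (Or.inr h)
  rcases hy with ⟨z, hzO, rfl⟩ | hyY
  · refine hO (fun n => ⟨x n, hxY n⟩) (fun n h => hx n (Or.inl ⟨_, h, rfl⟩)) z hzO ?_
    exact (ikConv_subtype_val_iff I K _ z).mp hconv
  · exact hY x (fun n h => h (hxY n)) y hyY hconv

theorem ik_closed_subspace_ik_sequential_general {X : Type*} [TopologicalSpace X]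
    (I K : Set (Set ℕ))
    (hX : ∀ O : Set X, IKOpen I K O → IsOpen O)
    (Y : Set X) (hY : IKOpen I K Yᶜ)
    (O : Set Y) (hO : IKOpen I K O) :
    IsOpen O := by
  have htrace : O = Subtype.val ⁻¹' (Subtype.val '' O ∪ Yᶜ) := by
    ext z
    simp
  rw [htrace]
  exact (hX _ (hY.image_val_union_compl hO)).preimage continuous_subtype_val

theorem ik_closed_subspace_ik_sequential {X : Type*} [TopologicalSpace X]
    (I K : Set (Set ℕ)) (hI : IsIdeal I) (hK : IsIdeal K)
    (hIfin : ContainsFin I) (hKfin : ContainsFin K)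
    (hX : ∀ O : Set X, IKOpen I K O → IsOpen O)
    (Y : Set X) (hY : IKOpen I K Yᶜ)
    (O : Set Y) (hO : IKOpen I K O) :
    IsOpen O :=
  ik_closed_subspace_ik_sequential_general I K hX Y hY O hO
end

section
/- Let I, K be ideals on ω and X a topological space. For every sequence x = (x_n) in X, the set C_x(I^K) of all I^K-cluster points of x is closed in X. -/
/-- `y` is a `K`-cluster point of `f`. -/
def IdealClusterPt {S X : Type*} [TopologicalSpace X] (K : Set (Set S)) (f : S → X) (y : X) : Prop :=
  ∀ U ∈ nhds y, {s | f s ∈ U} ∉ K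

open Classical in
/-- `y` is an `I^K`-cluster point of `f`. -/
def IKClusterPt {S X : Type*} [TopologicalSpace X] (I K : Set (Set S)) (f : S → X) (y : X) : Prop :=
  ∃ M : Set S, Mᶜ ∈ I ∧ IdealClusterPt K (fun s => if s ∈ M then f s else y) y

/-!
Replacing `x n` by `y` off `M` adds the set `Mᶜ ∈ I` to every `{n | x n ∈ U}` with `y ∈ U`.
If some `A ∈ I` is not in `K`, taking `M = Aᶜ` therefore makes every point an `I^K`-cluster
point. Otherwise `I ⊆ K`, adding a set of `I` does not change membership in `K`, and the
`I^K`-cluster points are the `K`-cluster points, which form a closed set because an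
open neighbourhood of a point of their closure is also a neighbourhood of one of them.
-/

namespace IsIdeal

variable {S : Type*} {K : Set (Set S)}

theorem mem_of_subset_s19 (hK : IsIdeal K) {A B : Set S} (hB : B ∈ K) (hAB : A ⊆ B) : A ∈ K :=
  hK.2.2.1 A B hB hAB

theorem union_mem_iff (hK : IsIdeal K) {A B : Set S} : A ∪ B ∈ K ↔ A ∈ K ∧ B ∈ K :=
  ⟨fun h => ⟨hK.mem_of_subset_s19 h Set.subset_union_left, hK.mem_of_subset_s19 h Set.subset_union_right⟩,
    fun h => hK.2.1 A B h.1 h.2⟩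

end IsIdeal

open Classical in
theorem setOf_ite_mem_eq_union {S X : Type*} (f : S → X) (M : Set S) {y : X} {U : Set X}
    (hy : y ∈ U) :
    {s | (if s ∈ M then f s else y) ∈ U} = {s | f s ∈ U} ∪ Mᶜ := by
  ext s
  by_cases hs : s ∈ M <;> simp [hs, hy]

section ClusterPoints

variable {S X : Type*} [TopologicalSpace X] {I K : Set (Set S)}

theorem ikClusterPt_iff (f : S → X) (y : X) :
    IKClusterPt I K f y ↔ ∃ M : Set S, Mᶜ ∈ I ∧ ∀ U ∈ nhds y, {s | f s ∈ U} ∪ Mᶜ ∉ K := by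
  refine exists_congr fun M => and_congr_right fun _ => forall₂_congr fun U hU => ?_
  rw [setOf_ite_mem_eq_union f M (mem_of_mem_nhds hU)]

theorem ikClusterPt_of_mem_of_not_mem (hK : IsIdeal K) {A : Set S} (hAI : A ∈ I) (hAK : A ∉ K)
    (f : S → X) (y : X) : IKClusterPt I K f y := by
  refine (ikClusterPt_iff f y).2 ⟨Aᶜ, by rwa [compl_compl], fun U _ hU => hAK ?_⟩
  rw [compl_compl] at hU
  exact (hK.union_mem_iff.1 hU).2

theorem ikClusterPt_iff_idealClusterPt (hI : IsIdeal I) (hK : IsIdeal K) (hIK : I ⊆ K)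
    (f : S → X) (y : X) : IKClusterPt I K f y ↔ IdealClusterPt K f y := by
  rw [ikClusterPt_iff]
  constructor
  · rintro ⟨M, hMI, hM⟩ U hU hfU
    exact hM U hU (hK.union_mem_iff.2 ⟨hfU, hIK hMI⟩)
  · intro h
    refine ⟨Set.univ, by rw [Set.compl_univ]; exact hI.1, fun U hU hfU => h U hU ?_⟩
    exact (hK.union_mem_iff.1 hfU).1

theorem isClosed_setOf_idealClusterPt (hK : IsIdeal K) (f : S → X) :
    IsClosed {y | IdealClusterPt K f y} := by
  refine isClosed_of_closure_subset fun y hy U hU hfU => ?_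
  obtain ⟨V, hVU, hVopen, hyV⟩ := mem_nhds_iff.1 hU
  obtain ⟨z, hzV, hz⟩ := mem_closure_iff.1 hy V hVopen hyV
  exact hz V (hVopen.mem_nhds hzV) (hK.mem_of_subset_s19 hfU (Set.preimage_mono hVU))

end ClusterPoints

theorem ik_clusterPts_closed {X : Type*} [TopologicalSpace X]
    (I K : Set (Set ℕ)) (hI : IsIdeal I) (hK : IsIdeal K)
    (x : ℕ → X) :
    IsClosed {y : X | IKClusterPt I K x y} := by
  by_cases hIK : I ⊆ K
  · simp_rw [ikClusterPt_iff_idealClusterPt hI hK hIK]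
    exact isClosed_setOf_idealClusterPt hK x
  · obtain ⟨A, hAI, hAK⟩ := Set.not_subset.1 hIK
    simp_rw [ikClusterPt_of_mem_of_not_mem hK hAI hAK, Set.ofPred_true]
    exact isClosed_univ
end
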